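/- (Instability of double-resolution tomography) For every α ∈ ℕ there exist finite sets F₁, F₂ ⊆ ℤ² with the following properties, where the 'data' of a finite set F ⊆ ℤ² consist of all its horizontal line counts |F ∩ (ℤ × {j})| (j ∈ ℤ), all its vertical line counts |F ∩ ({i} × ℤ)| (i ∈ ℤ), and all its 2×2 block counts |F ∩ ({2a, 2a+1} × {2b, 2b+1})| ((a,b) ∈ ℤ²): (i) F₁ is the unique finite subset of ℤ² having the data of F₁; (ii) F₂ is the unique finite subset of ℤ² having the data of F₂; (iii) Δ_𝒮(F₁, F₂) = 4, where 𝒮 consists of the two coordinate axes of ℝ²; (iv) |F₁| = |F₂| ≥ α; (v) |F₁ ∩ F₂| = |F₁|/2. -/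

import Mathlib

/-- Number of points of `F` on the horizontal line `ℤ × {j}`. -/
def rowCount (F : Finset (Fin 2 → ℤ)) (j : ℤ) : ℕ := (F.filter fun x => x 1 = j).card

/-- Number of points of `F` on the vertical line `{i} × ℤ`. -/
def colCount (F : Finset (Fin 2 → ℤ)) (i : ℤ) : ℕ := (F.filter fun x => x 0 = i).card

/-- Number of points of `F` in the 2×2 block `{2a, 2a+1} × {2b, 2b+1}`. -/
def blockCount (F : Finset (Fin 2 → ℤ)) (a b : ℤ) : ℕ :=
  (F.filter fun x => (x 0 = 2 * a ∨ x 0 = 2 * a + 1) ∧ (x 1 = 2 * b ∨ x 1 = 2 * b + 1)).card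

/-- `F` and `G` have the same double-resolution data: equal row sums, column sums,
and 2×2 block counts. -/
def SameData (F G : Finset (Fin 2 → ℤ)) : Prop :=
  (∀ j : ℤ, rowCount F j = rowCount G j) ∧ (∀ i : ℤ, colCount F i = colCount G i) ∧
  (∀ a b : ℤ, blockCount F a b = blockCount G a b)

/-
All points used have both coordinates even, so every block row and block column meets at most one
occupied line; then a set is pinned down by its data, because each nonempty block of a competitor
must contain a point on the occupied row and column of that block.

Take `F₁ = {(2k, 2k) : 0 ≤ k ≤ 4n + 1}` and `F₂ = {(2k, 2σ k) : -1 ≤ k ≤ 4n}`, where `σ` reverses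
`[0, 2n)`. On `[0, 2n)` the diagonal is replaced by an anti-diagonal with the same rows and columns,
on `[2n, 4n]` the two sets agree, and moving the last diagonal point from `4n + 1` to `-1` changes
exactly two rows and two columns.
-/

open Finset
open scoped symmDiff

theorem Finset.card_filter_eq_ite_mem_image {α β : Type*} [DecidableEq β] {s : Finset α}
    {g : α → β} (hg : Set.InjOn g s) (b : β) :
    #(s.filter (g · = b)) = if b ∈ s.image g then 1 else 0 := by
  split_ifs with hb
  · obtain ⟨a, ha, rfl⟩ := mem_image.1 hb
    rw [card_eq_one]
    exact ⟨a, eq_singleton_iff_unique_mem.2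
      ⟨mem_filter.2 ⟨ha, rfl⟩, fun a' ha' => hg (mem_filter.1 ha').1 ha (mem_filter.1 ha').2⟩⟩
  · rw [card_eq_zero, filter_eq_empty_iff]
    exact fun a ha hab => hb (mem_image.2 ⟨a, ha, hab⟩)

theorem finsum_natAbs_sub_ite_mem {β : Type*} [DecidableEq β] (s t : Finset β) :
    ∑ᶠ b, (((if b ∈ s then 1 else 0 : ℕ) : ℤ) - ((if b ∈ t then 1 else 0 : ℕ) : ℤ)).natAbs
      = #(s ∆ t) := by
  have hsummand : ∀ b,
      (((if b ∈ s then 1 else 0 : ℕ) : ℤ) - ((if b ∈ t then 1 else 0 : ℕ) : ℤ)).natAbs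
        = if b ∈ s ∆ t then 1 else 0 := by
    intro b
    by_cases hs : b ∈ s <;> by_cases ht : b ∈ t <;> simp [mem_symmDiff, hs, ht]
  rw [finsum_congr hsummand,
    finsum_eq_sum_of_support_subset (fun b => if b ∈ s ∆ t then 1 else 0)
      (Function.support_subset_iff'.2 fun b hb => if_neg hb),
    sum_boole, filter_mem_eq_inter, inter_self, Nat.cast_id]

lemma Int.ediv_two_eq_iff {x a : ℤ} : x / 2 = a ↔ x = 2 * a ∨ x = 2 * a + 1 := by omega

/-- `x / 2` is the index of the block row (or column) containing the line `x`; the hypothesis says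
that inside each block row and each block column, `F` occupies at most one line. -/
theorem eq_of_sameData_of_one_line_per_block {F G : Finset (Fin 2 → ℤ)}
    (hF : ∀ i, ∀ u ∈ F, ∀ v ∈ F, u i / 2 = v i / 2 → u i = v i) (h : SameData G F) :
    G = F := by
  obtain ⟨hrow, hcol, hblock⟩ := h
  have hline : ∀ i t, #(G.filter (· i = t)) = #(F.filter (· i = t)) := by
    intro i t; fin_cases i
    · exact hcol t
    · exact hrow t
  have hblock' : ∀ a b, #(G.filter fun x => x 0 / 2 = a ∧ x 1 / 2 = b) =
      #(F.filter fun x => x 0 / 2 = a ∧ x 1 / 2 = b) := by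
    simpa only [blockCount, ← Int.ediv_two_eq_iff] using hblock
  have key : ∀ g ∈ G, ∀ f ∈ F, (∀ i, g i / 2 = f i / 2) → g = f := by
    intro g hg f hf hgf
    funext i
    obtain ⟨w, hw⟩ : (F.filter (· i = g i)).Nonempty := by
      rw [← card_pos, ← hline]
      exact card_pos.2 ⟨g, mem_filter.2 ⟨hg, rfl⟩⟩
    obtain ⟨hwF, hwi⟩ := mem_filter.1 hw
    rw [← hwi]
    exact hF i w hwF f hf (by rw [hwi, hgf])
  have hmeet : ∀ a b,
      (∃ g ∈ G, g 0 / 2 = a ∧ g 1 / 2 = b) ↔ (∃ f ∈ F, f 0 / 2 = a ∧ f 1 / 2 = b) := by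
    intro a b
    simp only [← filter_nonempty_iff, ← card_pos, hblock']
  ext u
  constructor
  · intro hu
    obtain ⟨f, hf, h0, h1⟩ := (hmeet _ _).1 ⟨u, hu, rfl, rfl⟩
    rwa [key u hu f hf (by intro i; fin_cases i <;> simp [h0, h1])]
  · intro hu
    obtain ⟨g, hg, h0, h1⟩ := (hmeet _ _).2 ⟨u, hu, rfl, rfl⟩
    rwa [← key g hg u hu (by intro i; fin_cases i <;> simp [h0, h1])]

/-- The X-ray difference `Δ_𝒮(F₁, F₂)` for `𝒮` the two coordinate axes. -/
noncomputable def xrayDiff (F₁ F₂ : Finset (Fin 2 → ℤ)) : ℕ :=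
  (∑ᶠ j : ℤ, ((rowCount F₁ j : ℤ) - (rowCount F₂ j : ℤ)).natAbs) +
    (∑ᶠ i : ℤ, ((colCount F₁ i : ℤ) - (colCount F₂ i : ℤ)).natAbs)

def evenGraph (X : Finset ℤ) (f : ℤ → ℤ) : Finset (Fin 2 → ℤ) :=
  X.image fun k => ![2 * k, 2 * f k]

section evenGraph

variable {X Y : Finset ℤ} {f g : ℤ → ℤ}

lemma mem_evenGraph {u : Fin 2 → ℤ} :
    u ∈ evenGraph X f ↔ ∃ k ∈ X, u 0 = 2 * k ∧ u 1 = 2 * f k := by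
  simp only [evenGraph, mem_image]
  refine exists_congr fun k => and_congr_right fun _ => ⟨?_, fun ⟨h0, h1⟩ => ?_⟩
  · rintro rfl; simp
  · ext i; fin_cases i <;> simp [h0, h1]

lemma eq_evenGraph_of_sameData {G : Finset (Fin 2 → ℤ)} (h : SameData G (evenGraph X f)) :
    G = evenGraph X f := by
  have heven : ∀ u ∈ evenGraph X f, ∀ i, u i % 2 = 0 := by
    intro u hu i
    obtain ⟨k, -, h0, h1⟩ := mem_evenGraph.1 hu
    fin_cases i <;> simp [h0, h1]
  exact eq_of_sameData_of_one_line_per_block (fun i u hu v hv _ => by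
    have := heven u hu i; have := heven v hv i; omega) h

lemma card_evenGraph : #(evenGraph X f) = #X :=
  card_image_of_injective _ fun k k' h => by simpa using congrFun h 0

lemma injOn_apply_zero_evenGraph : Set.InjOn (· 0) (evenGraph X f : Set (Fin 2 → ℤ)) := by
  intro u hu v hv (h : u 0 = v 0)
  obtain ⟨k, -, hu0, hu1⟩ := mem_evenGraph.1 hu
  obtain ⟨k', -, hv0, hv1⟩ := mem_evenGraph.1 hv
  obtain rfl : k = k' := by omega
  ext i; fin_cases i <;> simp [hu0, hu1, hv0, hv1]

lemma injOn_apply_one_evenGraph (hf : Set.InjOn f X) :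
    Set.InjOn (· 1) (evenGraph X f : Set (Fin 2 → ℤ)) := by
  intro u hu v hv (h : u 1 = v 1)
  obtain ⟨k, hk, hu0, hu1⟩ := mem_evenGraph.1 hu
  obtain ⟨k', hk', hv0, hv1⟩ := mem_evenGraph.1 hv
  obtain rfl : k = k' := hf hk hk' (by omega)
  exact injOn_apply_zero_evenGraph hu hv (hu0.trans hv0.symm)

lemma colCount_evenGraph (i : ℤ) :
    colCount (evenGraph X f) i = if i ∈ X.image (2 * ·) then 1 else 0 := by
  rw [colCount, card_filter_eq_ite_mem_image injOn_apply_zero_evenGraph, evenGraph, image_image]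
  rfl

lemma rowCount_evenGraph (hf : Set.InjOn f X) (j : ℤ) :
    rowCount (evenGraph X f) j = if j ∈ (X.image f).image (2 * ·) then 1 else 0 := by
  rw [rowCount, card_filter_eq_ite_mem_image (injOn_apply_one_evenGraph hf), evenGraph,
    image_image, image_image]
  rfl

lemma xrayDiff_evenGraph (hf : Set.InjOn f X) (hg : Set.InjOn g Y) :
    xrayDiff (evenGraph X f) (evenGraph Y g) = #(X.image f ∆ Y.image g) + #(X ∆ Y) := by
  have h2 : Function.Injective ((2 : ℤ) * ·) := mul_right_injective₀ two_ne_zero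
  simp only [xrayDiff, rowCount_evenGraph hf, rowCount_evenGraph hg, colCount_evenGraph,
    finsum_natAbs_sub_ite_mem, ← image_symmDiff _ _ h2, card_image_of_injective _ h2]

lemma evenGraph_inter_evenGraph :
    evenGraph X f ∩ evenGraph Y g = evenGraph ((X ∩ Y).filter fun k => f k = g k) f := by
  ext u
  simp only [mem_inter, mem_evenGraph, mem_filter]
  constructor
  · rintro ⟨⟨k, hk, h0, h1⟩, ⟨k', hk', h0', h1'⟩⟩
    obtain rfl : k = k' := by omega
    exact ⟨k, ⟨⟨hk, hk'⟩, by omega⟩, h0, h1⟩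
  · rintro ⟨k, ⟨⟨hk, hk'⟩, hfg⟩, h0, h1⟩
    exact ⟨⟨k, hk, h0, h1⟩, ⟨k, hk', h0, hfg ▸ h1⟩⟩

end evenGraph

def reverseIco (m k : ℤ) : ℤ := if 0 ≤ k ∧ k < m then m - 1 - k else k

lemma reverseIco_involutive (m : ℤ) : Function.Involutive (reverseIco m) := by
  intro k; unfold reverseIco; split_ifs <;> omega

lemma image_reverseIco_Ico {m a b : ℤ} (ha : a ≤ 0) (hb : m ≤ b) :
    (Ico a b).image (reverseIco m) = Ico a b := by
  ext t
  simp only [mem_image, mem_Ico]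
  constructor
  · rintro ⟨k, hk, rfl⟩; unfold reverseIco; split_ifs <;> omega
  · intro ht
    refine ⟨reverseIco m t, ?_, reverseIco_involutive m t⟩
    unfold reverseIco; split_ifs <;> omega

lemma card_Ico_symmDiff_Ico_sub_one {a b : ℤ} (h : a < b) :
    #(Ico a b ∆ Ico (a - 1) (b - 1)) = 2 := by
  have : Ico a b ∆ Ico (a - 1) (b - 1) = {a - 1, b - 1} := by
    ext k; simp only [mem_symmDiff, mem_Ico, mem_insert, mem_singleton]; omega
  rw [this, card_pair (by omega)]

noncomputable def diagonalSet (n : ℕ) : Finset (Fin 2 → ℤ) :=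
  evenGraph (Ico (0 : ℤ) (4 * n + 2)) id

noncomputable def switchedSet (n : ℕ) : Finset (Fin 2 → ℤ) :=
  evenGraph (Ico (-1 : ℤ) (4 * n + 1)) (reverseIco (2 * n))

lemma card_diagonalSet (n : ℕ) : #(diagonalSet n) = 4 * n + 2 := by
  rw [diagonalSet, card_evenGraph, Int.card_Ico]; omega

lemma card_switchedSet (n : ℕ) : #(switchedSet n) = 4 * n + 2 := by
  rw [switchedSet, card_evenGraph, Int.card_Ico]; omega

lemma card_diagonalSet_inter_switchedSet (n : ℕ) :
    #(diagonalSet n ∩ switchedSet n) = 2 * n + 1 := by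
  have hfix : ((Ico (0 : ℤ) (4 * n + 2) ∩ Ico (-1) (4 * n + 1)).filter
      fun k => id k = reverseIco (2 * n) k) = Ico (2 * n : ℤ) (4 * n + 1) := by
    ext k
    rw [mem_filter, mem_inter, mem_Ico, mem_Ico, mem_Ico]
    unfold reverseIco
    split_ifs <;> simp <;> omega
  rw [diagonalSet, switchedSet, evenGraph_inter_evenGraph, hfix, card_evenGraph, Int.card_Ico]
  omega

lemma xrayDiff_diagonalSet_switchedSet (n : ℕ) : xrayDiff (diagonalSet n) (switchedSet n) = 4 := by
  have hsymm := card_Ico_symmDiff_Ico_sub_one (a := 0) (b := 4 * n + 2) (by omega)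
  rw [zero_sub, add_sub_assoc, show (2 : ℤ) - 1 = 1 by norm_num] at hsymm
  rw [diagonalSet, switchedSet, xrayDiff_evenGraph (Set.injOn_id _)
    (reverseIco_involutive _).injective.injOn, image_id,
    image_reverseIco_Ico (by norm_num) (by omega), hsymm]

theorem instability_double_resolution (α : ℕ) :
    ∃ F₁ F₂ : Finset (Fin 2 → ℤ),
      (∀ G : Finset (Fin 2 → ℤ), SameData G F₁ → G = F₁) ∧
      (∀ G : Finset (Fin 2 → ℤ), SameData G F₂ → G = F₂) ∧
      ((∑ᶠ j : ℤ, ((rowCount F₁ j : ℤ) - (rowCount F₂ j : ℤ)).natAbs) +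
       (∑ᶠ i : ℤ, ((colCount F₁ i : ℤ) - (colCount F₂ i : ℤ)).natAbs) = 4) ∧
      F₁.card = F₂.card ∧ α ≤ F₁.card ∧ 2 * (F₁ ∩ F₂).card = F₁.card := by
  refine ⟨diagonalSet α, switchedSet α, fun _ => eq_evenGraph_of_sameData,
    fun _ => eq_evenGraph_of_sameData, xrayDiff_diagonalSet_switchedSet α, ?_, ?_, ?_⟩
  · rw [card_diagonalSet, card_switchedSet]
  · rw [card_diagonalSet]; omega
  · rw [card_diagonalSet_inter_switchedSet, card_diagonalSet]; ring
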